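/- Local quadratic convergence of Picard–Newton to a nonsingular solution for any problem data (the unnumbered Theorem of Section 3.2): let u ∈ V be a weak NSE solution that is nonsingular with inf-sup constant δ > 0, let (uₖ), (ûₖ) be Picard–Newton iterates from u₀ ∈ V (for every k ≥ 0, û_{k+1} is a Picard update of uₖ and u_{k+1} is a Newton update of û_{k+1}), and set α := Mν⁻²‖f‖ and λ₀ := δ − 2Mα‖u − u₀‖. If λ₀ > 0 and (Mα²/λ₀)‖u − u₀‖ < 1, then for every k ≥ 0, ‖u − u_{k+1}‖ ≤ (Mα²/λ₀)‖u − uₖ‖², and ‖u − uₖ‖ → 0 as k → ∞; in particular the iterates converge at least linearly, and in fact quadratically, to u. -/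

import Mathlib

/-!
Subtracting the Picard equation from the NSE and testing with the Picard error `ê` kills the
convective term `b w ê ê`, so the a priori bound `ν‖u‖ ≤ ‖f‖` gives `‖ê‖ ≤ α‖u - w‖`.
Subtracting the Newton equation from the NSE leaves the linearization at `u` applied to the
Newton error `e`, equal to a quadratic form in `ê` and `e`; nonsingularity then gives
`δ‖e‖ ≤ 2M‖ê‖‖e‖ + M‖ê‖²`. As long as the errors stay below the initial one, `δ - 2M‖ê‖ ≥ λ₀`,
whence `‖e‖ ≤ (Mα²/λ₀)‖u - w‖²`; since `(Mα²/λ₀)‖u - u₀‖ < 1` the errors indeed decrease, and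
they are dominated by a geometric sequence.
-/

open scoped RealInnerProductSpace
open Filter Topology

theorem mul_le_of_mul_sq_le_mul {a c x : ℝ} (hc : 0 ≤ c) (hx : 0 ≤ x)
    (h : a * x ^ 2 ≤ c * x) : a * x ≤ c := by
  rcases hx.eq_or_lt with rfl | hx
  · simpa using hc
  · exact le_of_mul_le_mul_right (by nlinarith) hx

section NavierStokes

variable {V : Type*} [NormedAddCommGroup V] [InnerProductSpace ℝ V]
  (b : V →ₗ[ℝ] V →ₗ[ℝ] V →ₗ[ℝ] ℝ) (ν : ℝ) (f : V →L[ℝ] ℝ)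

def IsWeakSolution (u : V) : Prop :=
  ∀ v : V, ν * ⟪u, v⟫ + b u u v = f v

def IsPicardUpdate (w uhat : V) : Prop :=
  ∀ v : V, ν * ⟪uhat, v⟫ + b w uhat v = f v

def IsNewtonUpdate (uhat u' : V) : Prop :=
  ∀ v : V, ν * ⟪u', v⟫ + b uhat u' v + b u' uhat v - b uhat uhat v = f v

def IsNonsingular (u : V) (δ : ℝ) : Prop :=
  ∀ w : V, ∀ c : ℝ, c < δ * ‖w‖ → ∃ v : V, v ≠ 0 ∧ c * ‖v‖ < ν * ⟪w, v⟫ + b u w v + b w u v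

variable {b ν f}

theorem IsWeakSolution.mul_norm_le (hskew : ∀ z w : V, b z w w = 0) {u : V}
    (hu : IsWeakSolution b ν f u) : ν * ‖u‖ ≤ ‖f‖ := by
  have energy : ν * ‖u‖ ^ 2 ≤ ‖f‖ * ‖u‖ := by
    have h := hu u
    rw [hskew, real_inner_self_eq_norm_sq, add_zero] at h
    exact h ▸ (le_abs_self _).trans (f.le_opNorm u)
  exact mul_le_of_mul_sq_le_mul (norm_nonneg f) (norm_nonneg u) energy

theorem IsPicardUpdate.error_eq {u w uhat : V} (hu : IsWeakSolution b ν f u)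
    (huhat : IsPicardUpdate b ν f w uhat) (v : V) :
    ν * ⟪u - uhat, v⟫ + b w (u - uhat) v = -b (u - w) u v := by
  have h₁ := hu v
  have h₂ := huhat v
  simp only [map_sub, LinearMap.sub_apply, inner_sub_left]
  linarith

theorem IsPicardUpdate.norm_error_le (hskew : ∀ z w : V, b z w w = 0) {M : ℝ} (hM : 0 ≤ M)
    (hbound : ∀ z w v : V, |b z w v| ≤ M * ‖z‖ * ‖w‖ * ‖v‖) (hν : 0 < ν)
    {u w uhat : V} (hu : IsWeakSolution b ν f u) (huhat : IsPicardUpdate b ν f w uhat) :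
    ‖u - uhat‖ ≤ M * ν⁻¹ ^ 2 * ‖f‖ * ‖u - w‖ := by
  set e := u - uhat
  have energy : ν * ‖e‖ ^ 2 ≤ M * ‖u - w‖ * ‖u‖ * ‖e‖ := by
    have h := huhat.error_eq hu e
    rw [hskew, add_zero, real_inner_self_eq_norm_sq] at h
    exact h ▸ (neg_le_abs _).trans (hbound _ _ _)
  have h₁ : ν * ‖e‖ ≤ M * ‖u - w‖ * ‖u‖ :=
    mul_le_of_mul_sq_le_mul (by positivity) (norm_nonneg e) energy
  have h₂ : ν * ‖u‖ ≤ ‖f‖ := hu.mul_norm_le hskew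
  calc ‖e‖ = ν⁻¹ ^ 2 * (ν * (ν * ‖e‖)) := by field_simp
    _ ≤ ν⁻¹ ^ 2 * (ν * (M * ‖u - w‖ * ‖u‖)) := by gcongr
    _ = ν⁻¹ ^ 2 * (M * ‖u - w‖ * (ν * ‖u‖)) := by ring
    _ ≤ ν⁻¹ ^ 2 * (M * ‖u - w‖ * ‖f‖) := by gcongr
    _ = M * ν⁻¹ ^ 2 * ‖f‖ * ‖u - w‖ := by ring

theorem IsNewtonUpdate.error_eq {u uhat u' : V} (hu : IsWeakSolution b ν f u)
    (hu' : IsNewtonUpdate b ν f uhat u') (v : V) :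
    ν * ⟪u - u', v⟫ + b u (u - u') v + b (u - u') u v
      = b (u - uhat) (u - u') v + b (u - u') (u - uhat) v - b (u - uhat) (u - uhat) v := by
  have h₁ := hu v
  have h₂ := hu' v
  simp only [map_sub, LinearMap.sub_apply, inner_sub_left]
  linarith

theorem IsNewtonUpdate.norm_error_le {M δ : ℝ}
    (hbound : ∀ z w v : V, |b z w v| ≤ M * ‖z‖ * ‖w‖ * ‖v‖)
    {u uhat u' : V} (hu : IsWeakSolution b ν f u) (hnonsing : IsNonsingular b ν u δ)
    (hu' : IsNewtonUpdate b ν f uhat u') :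
    δ * ‖u - u'‖ ≤ 2 * M * ‖u - uhat‖ * ‖u - u'‖ + M * ‖u - uhat‖ ^ 2 := by
  set e := u - u'
  set ehat := u - uhat
  by_contra! hlt
  obtain ⟨v, -, hv⟩ := hnonsing e _ hlt
  rw [hu'.error_eq hu v] at hv
  have h₁ := (le_abs_self _).trans (hbound ehat e v)
  have h₂ := (le_abs_self _).trans (hbound e ehat v)
  have h₃ := (neg_le_abs _).trans (hbound ehat ehat v)
  nlinarith

end NavierStokes

theorem newton_error_le_sq {M α δ lam x₀ x y x' : ℝ} (hM : 0 ≤ M) (hα : 0 ≤ α)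
    (hlam : lam = δ - 2 * M * α * x₀) (hlam0 : 0 < lam) (hy : 0 ≤ y) (hx' : 0 ≤ x')
    (hyx : y ≤ α * x) (hx : x ≤ x₀) (hnewton : δ * x' ≤ 2 * M * y * x' + M * y ^ 2) :
    x' ≤ M * α ^ 2 / lam * x ^ 2 := by
  have hy₀ : 2 * M * y ≤ 2 * M * α * x₀ := by
    have : y ≤ α * x₀ := hyx.trans (by gcongr)
    nlinarith
  have hsq : M * y ^ 2 ≤ M * α ^ 2 * x ^ 2 := by
    rw [mul_assoc, ← mul_pow]
    gcongr
  rw [div_mul_eq_mul_div, le_div_iff₀ hlam0]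
  nlinarith

section QuadraticStep

variable {x : ℕ → ℝ} {C : ℝ}

theorem le_initial_of_quadratic_step (hx : ∀ k, 0 ≤ x k) (hC : 0 ≤ C) (hinit : C * x 0 ≤ 1)
    (hstep : ∀ k, x k ≤ x 0 → x (k + 1) ≤ C * x k ^ 2) (k : ℕ) : x k ≤ x 0 := by
  induction k with
  | zero => exact le_rfl
  | succ k ih =>
    calc x (k + 1) ≤ C * x k * x k := by simpa [sq, mul_assoc] using hstep k ih
      _ ≤ C * x 0 * x k := by gcongr; exact hx k
      _ ≤ 1 * x 0 := by gcongr; exact hx k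
      _ = x 0 := one_mul _

theorem tendsto_zero_of_quadratic_step (hx : ∀ k, 0 ≤ x k) (hC : 0 ≤ C) (hinit : C * x 0 < 1)
    (hquad : ∀ k, x (k + 1) ≤ C * x k ^ 2) (hbdd : ∀ k, x k ≤ x 0) :
    Tendsto x atTop (𝓝 0) := by
  have hρ : 0 ≤ C * x 0 := mul_nonneg hC (hx 0)
  have hcontract : ∀ k, x (k + 1) ≤ C * x 0 * x k := fun k =>
    calc x (k + 1) ≤ C * x k * x k := by simpa [sq, mul_assoc] using hquad k
      _ ≤ C * x 0 * x k := by gcongr; exacts [hx k, hbdd k]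
  have hgeom : Tendsto (fun k => (C * x 0) ^ k * x 0) atTop (𝓝 0) := by
    simpa using (tendsto_pow_atTop_nhds_zero_of_lt_one hρ hinit).mul_const (x 0)
  exact squeeze_zero hx (fun k => le_geom hρ k fun j _ => hcontract j) hgeom

end QuadraticStep

theorem picard_newton_local_convergence_general
    {V : Type*} [NormedAddCommGroup V] [InnerProductSpace ℝ V]
    (b : V →ₗ[ℝ] V →ₗ[ℝ] V →ₗ[ℝ] ℝ)
    (hskew : ∀ z w : V, b z w w = 0)
    (M : ℝ) (hM : 0 < M)
    (hbound : ∀ z w v : V, |b z w v| ≤ M * ‖z‖ * ‖w‖ * ‖v‖)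
    (f : V →L[ℝ] ℝ) (ν : ℝ) (hν : 0 < ν)
    (α : ℝ) (hα : α = M * ν⁻¹ ^ 2 * ‖f‖)
    (δ : ℝ)
    (usol : V)
    (hNSE : ∀ v : V, ν * ⟪usol, v⟫ + b usol usol v = f v)
    (hnonsing : ∀ w : V, ∀ c : ℝ, c < δ * ‖w‖ →
      ∃ v : V, v ≠ 0 ∧ c * ‖v‖ < ν * ⟪w, v⟫ + b usol w v + b w usol v)
    (u uhat : ℕ → V)
    (hPicard : ∀ k : ℕ, ∀ v : V,
      ν * ⟪uhat (k + 1), v⟫ + b (u k) (uhat (k + 1)) v = f v)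
    (hNewton : ∀ k : ℕ, ∀ v : V,
      ν * ⟪u (k + 1), v⟫ + b (uhat (k + 1)) (u (k + 1)) v
        + b (u (k + 1)) (uhat (k + 1)) v - b (uhat (k + 1)) (uhat (k + 1)) v = f v)
    (lam₀ : ℝ) (hlam : lam₀ = δ - 2 * M * α * ‖usol - u 0‖)
    (hlam0 : 0 < lam₀)
    (hinit : M * α ^ 2 / lam₀ * ‖usol - u 0‖ < 1) :
    (∀ k : ℕ, ‖usol - u (k + 1)‖ ≤ M * α ^ 2 / lam₀ * ‖usol - u k‖ ^ 2)
    ∧ Filter.Tendsto (fun k : ℕ => ‖usol - u k‖) Filter.atTop (nhds 0) := by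
  have hα0 : 0 ≤ α := hα ▸ by positivity
  have hC : 0 ≤ M * α ^ 2 / lam₀ := by positivity
  have hpicard (k : ℕ) : ‖usol - uhat (k + 1)‖ ≤ α * ‖usol - u k‖ :=
    hα ▸ IsPicardUpdate.norm_error_le hskew hM.le hbound hν hNSE (hPicard k)
  have hnewton (k : ℕ) := IsNewtonUpdate.norm_error_le hbound hNSE hnonsing (hNewton k)
  have hstep (k : ℕ) (hk : ‖usol - u k‖ ≤ ‖usol - u 0‖) :
      ‖usol - u (k + 1)‖ ≤ M * α ^ 2 / lam₀ * ‖usol - u k‖ ^ 2 :=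
    newton_error_le_sq hM.le hα0 hlam hlam0 (norm_nonneg _) (norm_nonneg _)
      (hpicard k) hk (hnewton k)
  have hbdd := le_initial_of_quadratic_step (x := fun k => ‖usol - u k‖)
    (fun k => norm_nonneg _) hC hinit.le hstep
  have hquad (k : ℕ) := hstep k (hbdd k)
  exact ⟨hquad, tendsto_zero_of_quadratic_step (fun k => norm_nonneg _) hC hinit hquad hbdd⟩

/-- Local quadratic convergence of Picard–Newton to a nonsingular solution for
any problem data: let `u` be a nonsingular weak NSE solution with inf-sup
constant `δ > 0`, let `(u k)`, `(uhat k)` be Picard–Newton iterates, and set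
`α := Mν⁻²‖f‖` and `λ₀ := δ − 2Mα‖u − u 0‖`. If `λ₀ > 0` and
`(Mα²/λ₀)‖u − u 0‖ < 1`, then for every `k`,
`‖u − u (k+1)‖ ≤ (Mα²/λ₀)‖u − u k‖²` and `‖u − u k‖ → 0`. -/
theorem picard_newton_local_convergence
    {V : Type*} [NormedAddCommGroup V] [InnerProductSpace ℝ V]
    (b : V →ₗ[ℝ] V →ₗ[ℝ] V →ₗ[ℝ] ℝ)
    (hskew : ∀ z w : V, b z w w = 0)
    (M : ℝ) (hM : 0 < M)
    (hbound : ∀ z w v : V, |b z w v| ≤ M * ‖z‖ * ‖w‖ * ‖v‖)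
    (f : V →L[ℝ] ℝ) (ν : ℝ) (hν : 0 < ν)
    (α : ℝ) (hα : α = M * ν⁻¹ ^ 2 * ‖f‖)
    (δ : ℝ) (hδ : 0 < δ)
    (usol : V)
    (hNSE : ∀ v : V, ν * ⟪usol, v⟫ + b usol usol v = f v)
    (hnonsing : ∀ w : V, ∀ c : ℝ, c < δ * ‖w‖ →
      ∃ v : V, v ≠ 0 ∧ c * ‖v‖ < ν * ⟪w, v⟫ + b usol w v + b w usol v)
    (u uhat : ℕ → V)
    (hPicard : ∀ k : ℕ, ∀ v : V,
      ν * ⟪uhat (k + 1), v⟫ + b (u k) (uhat (k + 1)) v = f v)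
    (hNewton : ∀ k : ℕ, ∀ v : V,
      ν * ⟪u (k + 1), v⟫ + b (uhat (k + 1)) (u (k + 1)) v
        + b (u (k + 1)) (uhat (k + 1)) v - b (uhat (k + 1)) (uhat (k + 1)) v = f v)
    (lam₀ : ℝ) (hlam : lam₀ = δ - 2 * M * α * ‖usol - u 0‖)
    (hlam0 : 0 < lam₀)
    (hinit : M * α ^ 2 / lam₀ * ‖usol - u 0‖ < 1) :
    (∀ k : ℕ, ‖usol - u (k + 1)‖ ≤ M * α ^ 2 / lam₀ * ‖usol - u k‖ ^ 2)
    ∧ Filter.Tendsto (fun k : ℕ => ‖usol - u k‖) Filter.atTop (nhds 0) :=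
  picard_newton_local_convergence_general b hskew M hM hbound f ν hν α hα δ usol hNSE hnonsing u
    uhat hPicard hNewton lam₀ hlam hlam0 hinit
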